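/- Let H be a real Hilbert space with a Hilbert (orthonormal) basis (φ_n)_{n∈ℕ}, let (λ_n)_{n∈ℕ} be pairwise distinct real numbers, let A be a 2×2 real matrix, and let u, v ∈ H. For each n set z_n = (⟨u, φ_n⟩, ⟨v, φ_n⟩) ∈ ℝ², and assume A·z_n = λ_n·z_n for every n ∈ ℕ. Then: (i) the set J = {n ∈ ℕ : z_n ≠ (0,0)} contains at most two elements; (ii) for every n ∈ J, λ_n is a real eigenvalue of A with eigenvector z_n; (iii) if (u,v) ≠ (0,0) then J is nonempty; (iv) u and v belong to the closed linear span of {φ_n : n ∈ J}. -/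
import Mathlib


open scoped RealInnerProductSpace

/-- Auxiliary: an eigenvalue of a 2×2 matrix satisfies its characteristic equation. -/
lemma aux_char_eq (A : Matrix (Fin 2) (Fin 2) ℝ) (lam : ℝ) (w : Fin 2 → ℝ)
    (hw : w ≠ 0) (h : A.mulVec w = lam • w) :
    lam ^ 2 - (A 0 0 + A 1 1) * lam + (A 0 0 * A 1 1 - A 0 1 * A 1 0) = 0 := by
  have e0 := congrFun h 0
  have e1 := congrFun h 1
  simp [Matrix.mulVec, dotProduct, Fin.sum_univ_two] at e0 e1
  have hw' : w 0 ≠ 0 ∨ w 1 ≠ 0 := by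
    by_contra hc
    push_neg at hc
    apply hw
    funext i
    fin_cases i <;> simp [hc.1, hc.2]
  rcases hw' with h0 | h1
  · have : (lam ^ 2 - (A 0 0 + A 1 1) * lam + (A 0 0 * A 1 1 - A 0 1 * A 1 0)) * w 0 = 0 := by
      linear_combination (A 1 1 - lam) * e0 - A 0 1 * e1
    rcases mul_eq_zero.1 this with h | h
    · exact h
    · exact absurd h h0
  · have : (lam ^ 2 - (A 0 0 + A 1 1) * lam + (A 0 0 * A 1 1 - A 0 1 * A 1 0)) * w 1 = 0 := by
      linear_combination (A 0 0 - lam) * e1 - A 1 0 * e0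
    rcases mul_eq_zero.1 this with h | h
    · exact h
    · exact absurd h h1

/-- Auxiliary: membership in the closed span when all other coefficients vanish. -/
lemma aux_mem_closure_span
    (H : Type*) [NormedAddCommGroup H] [InnerProductSpace ℝ H] [CompleteSpace H]
    (b : HilbertBasis ℕ ℝ H) (J : Set ℕ) (u : H)
    (h : ∀ n ∉ J, ⟪b n, u⟫ = 0) :
    u ∈ (Submodule.span ℝ (⇑b '' J)).topologicalClosure := by
  set K := (Submodule.span ℝ (⇑b '' J)).topologicalClosure with hK
  have hKc : IsClosed (K : Set H) := Submodule.isClosed_topologicalClosure _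
  have hsum : HasSum (fun i => b.repr u i • b i) u := b.hasSum_repr u
  refine hKc.mem_of_tendsto hsum (Filter.Eventually.of_forall ?_)
  intro s
  refine Submodule.sum_mem _ fun i _ => ?_
  by_cases hi : i ∈ J
  · exact Submodule.smul_mem _ _ <| Submodule.le_topologicalClosure _ <|
      Submodule.subset_span ⟨i, hi, rfl⟩
  · have : b.repr u i = 0 := by rw [b.repr_apply_apply]; exact h i hi
    simp [this]

/-- Abstract core of Lemma 3.1: if the coefficient vectors
z_n = (⟨u,φ_n⟩, ⟨v,φ_n⟩) satisfy A z_n = λ_n z_n with pairwise distinct λ_n, then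
at most two of them are nonzero, each nonzero one is an eigenvector of A, some is
nonzero when (u,v) ≠ 0, and u, v lie in the closed span of the corresponding φ_n. -/
theorem coefficients_eigenvector_structure
    (H : Type*) [NormedAddCommGroup H] [InnerProductSpace ℝ H] [CompleteSpace H]
    (b : HilbertBasis ℕ ℝ H)
    (lam : ℕ → ℝ) (hlam : Function.Injective lam)
    (A : Matrix (Fin 2) (Fin 2) ℝ) (u v : H)
    (z : ℕ → Fin 2 → ℝ) (hz : ∀ n, z n = ![⟪u, b n⟫, ⟪v, b n⟫])
    (hAz : ∀ n, A.mulVec (z n) = lam n • z n) :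
    (∃ n₁ n₂ : ℕ, {n : ℕ | z n ≠ 0} ⊆ {n₁, n₂}) ∧
    (∀ n : ℕ, z n ≠ 0 → z n ≠ 0 ∧ A.mulVec (z n) = lam n • z n) ∧
    ((u, v) ≠ ((0 : H), (0 : H)) → ∃ n, z n ≠ 0) ∧
    (u ∈ (Submodule.span ℝ (⇑b '' {n : ℕ | z n ≠ 0})).topologicalClosure ∧
      v ∈ (Submodule.span ℝ (⇑b '' {n : ℕ | z n ≠ 0})).topologicalClosure) := by
  have hchar : ∀ n, z n ≠ 0 →
      lam n ^ 2 - (A 0 0 + A 1 1) * lam n + (A 0 0 * A 1 1 - A 0 1 * A 1 0) = 0 :=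
    fun n hn => aux_char_eq A (lam n) (z n) hn (hAz n)
  refine ⟨?_, fun n hn => ⟨hn, hAz n⟩, ?_, ?_, ?_⟩
  · -- at most two nonzero coefficient vectors
    by_cases h1 : ∃ n, z n ≠ 0
    · obtain ⟨n₁, hn₁⟩ := h1
      by_cases h2 : ∃ n, z n ≠ 0 ∧ n ≠ n₁
      · obtain ⟨n₂, hn₂, hne⟩ := h2
        refine ⟨n₁, n₂, fun m hm => ?_⟩
        by_contra hm'
        simp only [Set.mem_insert_iff, Set.mem_singleton_iff, not_or] at hm'
        have c1 := hchar n₁ hn₁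
        have c2 := hchar n₂ hn₂
        have cm := hchar m hm
        have hl1 : lam m ≠ lam n₁ := fun h => hm'.1 (hlam h)
        have hl2 : lam m ≠ lam n₂ := fun h => hm'.2 (hlam h)
        have hl12 : lam n₁ ≠ lam n₂ := fun h => hne.symm (hlam h)
        -- from c1, cm, lam m ≠ lam n₁ : lam m + lam n₁ = A00 + A11; same for n₂
        have key1 : lam m + lam n₁ = A 0 0 + A 1 1 := by
          have h := sub_eq_zero.2 (cm.trans c1.symm)
          have : (lam m - lam n₁) * (lam m + lam n₁ - (A 0 0 + A 1 1)) = 0 := by ring_nf; nlinarith [h]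
          rcases mul_eq_zero.1 this with h' | h'
          · exact absurd (sub_eq_zero.1 h') hl1
          · linarith [sub_eq_zero.1 h']
        have key2 : lam m + lam n₂ = A 0 0 + A 1 1 := by
          have h := sub_eq_zero.2 (cm.trans c2.symm)
          have : (lam m - lam n₂) * (lam m + lam n₂ - (A 0 0 + A 1 1)) = 0 := by ring_nf; nlinarith [h]
          rcases mul_eq_zero.1 this with h' | h'
          · exact absurd (sub_eq_zero.1 h') hl2
          · linarith [sub_eq_zero.1 h']
        exact hl12 (by linarith)
      · push_neg at h2
        refine ⟨n₁, n₁, fun m hm => ?_⟩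
        by_contra hm'
        simp only [Set.mem_insert_iff, Set.mem_singleton_iff, not_or] at hm'
        exact hm'.1 (h2 m hm)
    · push_neg at h1
      exact ⟨0, 0, fun m hm => absurd (h1 m) hm⟩
  · -- nontrivial solution gives a nonzero coefficient vector
    intro huv
    by_contra hc
    push_neg at hc
    apply huv
    have hcoef : ∀ w : H, (∀ n, ⟪w, b n⟫ = 0) → w = 0 := by
      intro w hw
      have : b.repr w = 0 := by
        ext i
        simp [b.repr_apply_apply, real_inner_comm, hw i]
      simpa using congrArg b.repr.symm this
    have hu : u = 0 := by
      apply hcoef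
      intro n
      have := congrFun (hc n) 0
      rw [hz n] at this
      simpa using this
    have hv : v = 0 := by
      apply hcoef
      intro n
      have := congrFun (hc n) 1
      rw [hz n] at this
      simpa using this
    simp [hu, hv]
  · refine aux_mem_closure_span H b _ u fun n hn => ?_
    simp only [Set.mem_setOf_eq, not_not] at hn
    have := congrFun hn 0
    rw [hz n] at this
    simpa [real_inner_comm] using this
  · refine aux_mem_closure_span H b _ v fun n hn => ?_
    simp only [Set.mem_setOf_eq, not_not] at hn
    have := congrFun hn 1
    rw [hz n] at this
    simpa [real_inner_comm] using this
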